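/- arXiv:1806.07550 — 4 statements merged into one kernel-verified Lean document; each statement's English description precedes it below -/
import Mathlib

section
/- Let σ > 0, let X ~ N(0,1) and Δ ~ N(0,σ²) be independent real Gaussian random variables. Then P(X < 0 and X + Δ > 0) = arctan(σ)/(2π). -/
/-!
Write `Δ = σ Z` with `Z` standard normal and independent of `X`. The event becomes
`{X < 0, 0 < X + σ Z}`, a wedge in the plane with opening angle `arctan σ`. The density of
`(X, Z)` is rotation invariant, so in polar coordinates it factors into a radial part times the
uniform law on the angle: the wedge has probability `arctan σ / (2π)`.
-/

open MeasureTheory ProbabilityTheory Real Set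
open scoped NNReal ENNReal

lemma gaussianPDF_mul_gaussianPDF_eq_of_sq_add_sq_eq (v : ℝ≥0) {x y x' y' : ℝ}
    (h : x ^ 2 + y ^ 2 = x' ^ 2 + y' ^ 2) :
    gaussianPDF 0 v x * gaussianPDF 0 v y = gaussianPDF 0 v x' * gaussianPDF 0 v y' := by
  have hReal : gaussianPDFReal 0 v x * gaussianPDFReal 0 v y
      = gaussianPDFReal 0 v x' * gaussianPDFReal 0 v y' := by
    simp only [gaussianPDFReal, sub_zero]
    rw [mul_mul_mul_comm, ← exp_add, mul_mul_mul_comm, ← exp_add, ← add_div, ← add_div,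
      ← neg_add, ← neg_add, h]
  simp only [gaussianPDF, ← ENNReal.ofReal_mul (gaussianPDFReal_nonneg _ _ _), hReal]

lemma gaussianPDF_mul_gaussianPDF_polarCoord_symm (v : ℝ≥0) (p : ℝ × ℝ) :
    gaussianPDF 0 v (polarCoord.symm p).1 * gaussianPDF 0 v (polarCoord.symm p).2
      = gaussianPDF 0 v p.1 * gaussianPDF 0 v 0 := by
  refine gaussianPDF_mul_gaussianPDF_eq_of_sq_add_sq_eq v ?_
  simp only [polarCoord_symm_apply]
  linear_combination p.1 ^ 2 * sin_sq_add_cos_sq p.2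

lemma gaussianReal_prod_apply_eq_lintegral_mul_volume {v : ℝ≥0} (hv : v ≠ 0)
    {W : Set (ℝ × ℝ)} {S : Set ℝ} (hW : MeasurableSet W) (hS : MeasurableSet S)
    (hSπ : S ⊆ Ioo (-π) π)
    (hWS : ∀ r > 0, ∀ θ ∈ Ioo (-π) π, polarCoord.symm (r, θ) ∈ W ↔ θ ∈ S) :
    (gaussianReal 0 v).prod (gaussianReal 0 v) W
      = (∫⁻ r in Ioi 0, ENNReal.ofReal r * (gaussianPDF 0 v r * gaussianPDF 0 v 0)) *
          volume S := by
  set ρ : ℝ → ℝ≥0∞ := fun r => ENNReal.ofReal r * (gaussianPDF 0 v r * gaussianPDF 0 v 0)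
  have hpolar : ∀ p ∈ polarCoord.target, ENNReal.ofReal p.1 •
      W.indicator (fun q => gaussianPDF 0 v q.1 * gaussianPDF 0 v q.2) (polarCoord.symm p)
      = ρ p.1 * S.indicator 1 p.2 := by
    rintro ⟨r, θ⟩ ⟨hr, hθ⟩
    by_cases hθS : θ ∈ S
    · rw [indicator_of_mem ((hWS r hr θ hθ).2 hθS), indicator_of_mem hθS,
        gaussianPDF_mul_gaussianPDF_polarCoord_symm]
      simp [ρ]
    · rw [indicator_of_notMem (mt (hWS r hr θ hθ).1 hθS), indicator_of_notMem hθS]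
      simp
  rw [gaussianReal_of_var_ne_zero _ hv, prod_withDensity (measurable_gaussianPDF _ _)
      (measurable_gaussianPDF _ _), withDensity_apply _ hW, ← Measure.volume_eq_prod,
    ← lintegral_indicator hW, ← lintegral_comp_polarCoord_symm,
    setLIntegral_congr_fun polarCoord.open_target.measurableSet hpolar, polarCoord_target,
    Measure.volume_eq_prod, ← Measure.prod_restrict,
    lintegral_prod_mul (g := S.indicator 1) (by fun_prop) (by fun_prop),
    lintegral_indicator_one hS, Measure.restrict_apply hS, inter_eq_left.2 hSπ]

/-- The radial factor is never computed: total mass `1` (the case `W = univ`) forces it to be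
`1 / (2π)`. -/
lemma gaussianReal_prod_apply_eq_volume_div_two_pi {v : ℝ≥0} (hv : v ≠ 0)
    {W : Set (ℝ × ℝ)} {S : Set ℝ} (hW : MeasurableSet W) (hS : MeasurableSet S)
    (hSπ : S ⊆ Ioo (-π) π)
    (hWS : ∀ r > 0, ∀ θ ∈ Ioo (-π) π, polarCoord.symm (r, θ) ∈ W ↔ θ ∈ S) :
    (gaussianReal 0 v).prod (gaussianReal 0 v) W = volume S / ENNReal.ofReal (2 * π) := by
  have hmass := gaussianReal_prod_apply_eq_lintegral_mul_volume hv MeasurableSet.univ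
    measurableSet_Ioo subset_rfl fun _ _ θ hθ => by simp [hθ]
  rw [measure_univ, Real.volume_Ioo, show π - -π = 2 * π by ring] at hmass
  rw [gaussianReal_prod_apply_eq_lintegral_mul_volume hv hW hS hSπ hWS,
    ENNReal.eq_inv_of_mul_eq_one_left hmass.symm, ENNReal.div_eq_inv_mul, mul_comm]

lemma tan_lt_iff_lt_arctan {φ : ℝ} (σ : ℝ) (h₁ : -(π / 2) < φ) (h₂ : φ < π / 2) :
    tan φ < σ ↔ φ < arctan σ := by
  rw [← arctan_lt_arctan_iff, arctan_tan h₁ h₂]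

lemma pi_div_two_lt_of_cos_neg_of_pos_cos_add_mul_sin {σ θ : ℝ} (hσ : 0 ≤ σ)
    (hθ : θ ∈ Ioo (-π) π) (hcos : cos θ < 0) (hpos : 0 < cos θ + σ * sin θ) : π / 2 < θ := by
  have hsin : 0 < sin θ := pos_of_mul_pos_right (by linarith) hσ
  have hθ₀ : 0 < θ := by
    by_contra! h
    linarith [sin_nonpos_of_nonpos_of_neg_pi_le h hθ.1.le]
  by_contra! h
  linarith [cos_nonneg_of_mem_Icc ⟨by linarith, h⟩]

lemma cos_neg_and_pos_cos_add_mul_sin_iff {σ θ : ℝ} (hσ : 0 ≤ σ) (hθ : θ ∈ Ioo (-π) π) :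
    (cos θ < 0 ∧ 0 < cos θ + σ * sin θ) ↔ θ ∈ Ioo (π / 2) (π / 2 + arctan σ) := by
  suffices h : π / 2 < θ → ((cos θ < 0 ∧ 0 < cos θ + σ * sin θ) ↔ θ < π / 2 + arctan σ) by
    constructor
    · rintro ⟨hcos, hpos⟩
      have hθ' := pi_div_two_lt_of_cos_neg_of_pos_cos_add_mul_sin hσ hθ hcos hpos
      exact ⟨hθ', (h hθ').1 ⟨hcos, hpos⟩⟩
    · rintro ⟨h₁, h₂⟩
      exact (h h₁).2 h₂
  intro h₁
  obtain ⟨φ, rfl⟩ : ∃ φ, θ = φ + π / 2 := ⟨θ - π / 2, by ring⟩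
  have hφ₀ : 0 < φ := by linarith
  have hφ : φ < π / 2 := by linarith [hθ.2]
  rw [cos_add_pi_div_two, sin_add_pi_div_two, add_comm φ, add_lt_add_iff_left,
    ← tan_lt_iff_lt_arctan σ (by linarith) hφ, tan_eq_sin_div_cos,
    div_lt_iff₀ (cos_pos_of_mem_Ioo ⟨by linarith, hφ⟩)]
  have hsin : 0 < sin φ := sin_pos_of_pos_of_lt_pi hφ₀ (by linarith)
  constructor
  · rintro ⟨-, h⟩
    linarith
  · intro h
    constructor <;> linarith

lemma polarCoord_symm_mem_wedge_iff {σ r θ : ℝ} (hσ : 0 ≤ σ) (hr : 0 < r)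
    (hθ : θ ∈ Ioo (-π) π) :
    polarCoord.symm (r, θ) ∈ {p : ℝ × ℝ | p.1 < 0 ∧ 0 < p.1 + σ * p.2}
      ↔ θ ∈ Ioo (π / 2) (π / 2 + arctan σ) := by
  rw [← cos_neg_and_pos_cos_add_mul_sin_iff hσ hθ, polarCoord_symm_apply, mem_ofPred_eq,
    mul_left_comm σ, ← mul_add, mul_pos_iff_of_pos_left hr]
  exact and_congr_left' (smul_neg_iff_of_pos_left hr)

lemma gaussianReal_prod_apply_wedge {v : ℝ≥0} (hv : v ≠ 0) {σ : ℝ} (hσ : 0 ≤ σ) :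
    (gaussianReal 0 v).prod (gaussianReal 0 v) {p : ℝ × ℝ | p.1 < 0 ∧ 0 < p.1 + σ * p.2}
      = ENNReal.ofReal (arctan σ / (2 * π)) := by
  have hW : MeasurableSet {p : ℝ × ℝ | p.1 < 0 ∧ 0 < p.1 + σ * p.2} := by measurability
  have hsub : Ioo (π / 2) (π / 2 + arctan σ) ⊆ Ioo (-π) π :=
    Ioo_subset_Ioo (by linarith [pi_pos]) (by linarith [arctan_lt_pi_div_two σ])
  rw [gaussianReal_prod_apply_eq_volume_div_two_pi hv hW measurableSet_Ioo hsub
    fun r hr θ hθ => polarCoord_symm_mem_wedge_iff hσ hr hθ, Real.volume_Ioo,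
    ← ENNReal.ofReal_div_of_pos (by positivity), add_sub_cancel_left]

/-- If `X ~ N(0,1)` and `Δ ~ N(0,σ²)` are independent (with `σ > 0`), then the probability
that the binarized activation flips from `-1` to `+1`, i.e.
`P(X < 0 ∧ X + Δ > 0)`, equals `arctan σ / (2π)`. -/
theorem prob_sign_flip_neg_to_pos
    {Ω : Type*} [MeasurableSpace Ω] (μ : Measure Ω) [IsProbabilityMeasure μ]
    (σ : ℝ) (hσ : 0 < σ) (X Δ : Ω → ℝ)
    (hX : Measure.map X μ = gaussianReal 0 1)
    (hΔ : Measure.map Δ μ = gaussianReal 0 ⟨σ ^ 2, sq_nonneg σ⟩)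
    (hXΔ : IndepFun X Δ μ) :
    μ {ω | X ω < 0 ∧ 0 < X ω + Δ ω}
      = ENNReal.ofReal (Real.arctan σ / (2 * Real.pi)) := by
  have hXm : AEMeasurable X μ := .of_map_ne_zero (hX ▸ IsProbabilityMeasure.ne_zero _)
  have hΔm : AEMeasurable Δ μ :=
    .of_map_ne_zero (hΔ ▸ (instIsProbabilityMeasureGaussianReal 0 _).ne_zero)
  have hW : MeasurableSet {p : ℝ × ℝ | p.1 < 0 ∧ 0 < p.1 + p.2} := by measurability
  have hlaw : μ.map (fun ω => (X ω, Δ ω))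
      = ((gaussianReal 0 1).prod (gaussianReal 0 1)).map (Prod.map id (σ * ·)) := by
    rw [(indepFun_iff_map_prod_eq_prod_map_map hXm hΔm).mp hXΔ, hX, hΔ,
      ← Measure.map_prod_map _ _ measurable_id (measurable_const_mul σ), Measure.map_id,
      gaussianReal_map_const_mul]
    congr <;> simp
  calc μ {ω | X ω < 0 ∧ 0 < X ω + Δ ω}
      = μ.map (fun ω => (X ω, Δ ω)) {p | p.1 < 0 ∧ 0 < p.1 + p.2} :=
        (Measure.map_apply_of_aemeasurable (hXm.prodMk hΔm) hW).symm
    _ = (gaussianReal 0 1).prod (gaussianReal 0 1) {p | p.1 < 0 ∧ 0 < p.1 + σ * p.2} := by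
        rw [hlaw, Measure.map_apply (by fun_prop) hW]
        rfl
    _ = ENNReal.ofReal (arctan σ / (2 * π)) := gaussianReal_prod_apply_wedge one_ne_zero hσ.le
end

section
/- Let σ > 0, let X ~ N(0,1) and Δ ~ N(0,σ²) be independent real Gaussian random variables, and set γ = sign(X + Δ) − sign(X). Then P(γ = 0) = 1 − arctan(σ)/π. -/
/-!
Write `Δ = σ Y` with `Y` standard Gaussian and independent of `X`. The signs of `X` and `X + σ Y`
differ exactly when `(X, Y)` lies in the closed double wedge between the lines `x = 0` and
`x + σ y = 0`. In polar coordinates `x + σ y = r √(1 + σ²) cos (θ - arctan σ)`, so this wedge is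
`θ ∈ [-π/2, arctan σ - π/2] ∪ [π/2, π/2 + arctan σ]`, of total length `2 arctan σ`. The density of
an isotropic centred Gaussian on the plane depends only on `r`, so its polar angle is uniform on
`(-π, π)` and the wedge has probability `arctan σ / π`.
-/

open MeasureTheory ProbabilityTheory Real Set
open scoped ENNReal NNReal

theorem Real.measurable_sign : Measurable Real.sign :=
  Measurable.ite measurableSet_Iio measurable_const
    (Measurable.ite measurableSet_Ioi measurable_const measurable_const)

theorem measurableSet_sign_eq_sign {α : Type*} [MeasurableSpace α] {f g : α → ℝ}
    (hf : Measurable f) (hg : Measurable g) : MeasurableSet {a | sign (f a) = sign (g a)} :=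
  measurableSet_eq_fun (measurable_sign.comp hf) (measurable_sign.comp hg)

theorem Real.sign_mul_of_pos {c : ℝ} (hc : 0 < c) (x : ℝ) : sign (c * x) = sign x := by
  rcases lt_trichotomy x 0 with hx | rfl | hx
  · rw [sign_of_neg hx, sign_of_neg (mul_neg_of_pos_of_neg hc hx)]
  · rw [mul_zero]
  · rw [sign_of_pos hx, sign_of_pos (mul_pos hc hx)]

theorem Real.sign_ne_sign_iff {a b : ℝ} (h : a ≠ 0 ∨ b ≠ 0) :
    sign a ≠ sign b ↔ a ≤ 0 ∧ 0 ≤ b ∨ b ≤ 0 ∧ 0 ≤ a := by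
  rcases lt_trichotomy a 0 with ha | ha | ha <;> rcases lt_trichotomy b 0 with hb | hb | hb <;>
    simp only [sign_of_pos, sign_of_neg, sign_zero, ha, hb] <;> grind

theorem Real.cos_add_mul_sin_eq_sqrt_mul_cos_sub_arctan (σ θ : ℝ) :
    cos θ + σ * sin θ = √(1 + σ ^ 2) * cos (θ - arctan σ) := by
  have : 0 < √(1 + σ ^ 2) := by positivity
  rw [cos_sub, cos_arctan, sin_arctan]
  field_simp

theorem Real.sign_cos_eq_sign_pi_div_two_sub_abs {t : ℝ} (ht : |t| < 3 * π / 2) :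
    sign (cos t) = sign (π / 2 - |t|) := by
  rw [← cos_abs]
  rcases lt_trichotomy |t| (π / 2) with h | h | h
  · rw [sign_of_pos (cos_pos_of_mem_Ioo ⟨by linarith [abs_nonneg t, pi_pos], h⟩),
      sign_of_pos (by linarith)]
  · rw [h, cos_pi_div_two, sub_self]
  · rw [sign_of_neg (cos_neg_of_pi_div_two_lt_of_lt h (by linarith)), sign_of_neg (by linarith)]

theorem Real.sign_cos_sub_ne_sign_cos_iff {φ θ : ℝ} (hφ₀ : 0 < φ) (hφ : φ ≤ π / 2)
    (hθ : θ ∈ Ioo (-π) π) :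
    sign (cos (θ - φ)) ≠ sign (cos θ) ↔
      θ ∈ Icc (-(π / 2)) (φ - π / 2) ∪ Icc (π / 2) (φ + π / 2) := by
  obtain ⟨hθ₁, hθ₂⟩ := hθ
  rw [sign_cos_eq_sign_pi_div_two_sub_abs (by rw [abs_lt]; constructor <;> linarith),
    sign_cos_eq_sign_pi_div_two_sub_abs (by rw [abs_lt]; constructor <;> linarith),
    sign_ne_sign_iff]
  · simp only [mem_union, mem_Icc, sub_nonpos, sub_nonneg, abs_le, le_abs]
    grind
  · -- `|θ - φ| = |θ| = π / 2` would force `φ ∈ {0, π, -π}`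
    by_contra! h
    simp only [sub_eq_zero] at h
    grind

theorem gaussianPDF_mul_gaussianPDF_eq {v : ℝ≥0} {x y a b : ℝ}
    (h : x ^ 2 + y ^ 2 = a ^ 2 + b ^ 2) :
    gaussianPDF 0 v x * gaussianPDF 0 v y = gaussianPDF 0 v a * gaussianPDF 0 v b := by
  simp only [gaussianPDF, ← ENNReal.ofReal_mul (gaussianPDFReal_nonneg _ _ _)]
  congr 1
  simp only [gaussianPDFReal, sub_zero]
  rw [mul_mul_mul_comm, mul_mul_mul_comm _ (rexp _), ← exp_add, ← exp_add, ← add_div, ← add_div,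
    ← neg_add, ← neg_add, h]

section PolarAngle

variable {v : ℝ≥0} {s : Set (ℝ × ℝ)} {A : Set ℝ}

theorem gaussianReal_prod_apply_eq_mul_volume (hv : v ≠ 0) (hs : MeasurableSet s)
    (hA : MeasurableSet A)
    (hsA : ∀ r θ, 0 < r → θ ∈ Ioo (-π) π → (polarCoord.symm (r, θ) ∈ s ↔ θ ∈ A)) :
    (gaussianReal 0 v).prod (gaussianReal 0 v) s =
      (∫⁻ r in Ioi 0, ENNReal.ofReal r * (gaussianPDF 0 v r * gaussianPDF 0 v 0)) *
        volume (A ∩ Ioo (-π) π) := by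
  have hpolar : ∀ p ∈ polarCoord.target, ENNReal.ofReal p.1 •
      s.indicator (fun q ↦ gaussianPDF 0 v q.1 * gaussianPDF 0 v q.2) (polarCoord.symm p) =
      ENNReal.ofReal p.1 * (gaussianPDF 0 v p.1 * gaussianPDF 0 v 0) * A.indicator 1 p.2 := by
    rintro ⟨r, θ⟩ ⟨hr, hθ⟩
    have hnorm : (r * cos θ) ^ 2 + (r * sin θ) ^ 2 = r ^ 2 + 0 ^ 2 := by
      linear_combination r ^ 2 * cos_sq_add_sin_sq θ
    by_cases hθA : θ ∈ A
    · rw [indicator_of_mem ((hsA r θ hr hθ).2 hθA), indicator_of_mem hθA, polarCoord_symm_apply,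
        gaussianPDF_mul_gaussianPDF_eq hnorm, smul_eq_mul, Pi.one_apply, mul_one]
    · rw [indicator_of_notMem (mt (hsA r θ hr hθ).1 hθA), indicator_of_notMem hθA, smul_zero,
        mul_zero]
  rw [gaussianReal_of_var_ne_zero 0 hv,
    prod_withDensity (measurable_gaussianPDF 0 v) (measurable_gaussianPDF 0 v),
    ← Measure.volume_eq_prod, withDensity_apply _ hs, ← lintegral_indicator hs,
    ← lintegral_comp_polarCoord_symm,
    setLIntegral_congr_fun polarCoord.open_target.measurableSet hpolar, polarCoord_target,
    Measure.volume_eq_prod, ← Measure.prod_restrict,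
    lintegral_prod_mul
      (f := fun r ↦ ENNReal.ofReal r * (gaussianPDF 0 v r * gaussianPDF 0 v 0)) (by fun_prop)
      (measurable_one.indicator hA).aemeasurable,
    lintegral_indicator_one hA, Measure.restrict_apply hA]

/-- The radial factor is never computed: total mass one forces it to be `(2π)⁻¹`. -/
theorem gaussianReal_prod_apply_eq_volume_div (hv : v ≠ 0) (hs : MeasurableSet s)
    (hA : MeasurableSet A)
    (hsA : ∀ r θ, 0 < r → θ ∈ Ioo (-π) π → (polarCoord.symm (r, θ) ∈ s ↔ θ ∈ A)) :
    (gaussianReal 0 v).prod (gaussianReal 0 v) s =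
      volume (A ∩ Ioo (-π) π) / ENNReal.ofReal (2 * π) := by
  have hmass := gaussianReal_prod_apply_eq_mul_volume hv MeasurableSet.univ MeasurableSet.univ
    fun _ _ _ _ ↦ iff_of_true (mem_univ _) (mem_univ _)
  rw [measure_univ, univ_inter, volume_Ioo, sub_neg_eq_add, ← two_mul] at hmass
  rw [gaussianReal_prod_apply_eq_mul_volume hv hs hA hsA,
    ENNReal.eq_inv_of_mul_eq_one_left hmass.symm, div_eq_mul_inv, mul_comm]

end PolarAngle

theorem gaussianReal_prod_sign_add_mul_ne_sign {v : ℝ≥0} (hv : v ≠ 0) {σ : ℝ} (hσ : 0 < σ) :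
    (gaussianReal 0 v).prod (gaussianReal 0 v) {p | sign (p.1 + σ * p.2) ≠ sign p.1} =
      ENNReal.ofReal (arctan σ / π) := by
  set φ := arctan σ
  have hφ₀ : 0 < φ := arctan_pos.2 hσ
  have hφ : φ < π / 2 := arctan_lt_pi_div_two σ
  have hmeas : MeasurableSet {p : ℝ × ℝ | sign (p.1 + σ * p.2) ≠ sign p.1} :=
    (measurableSet_sign_eq_sign (by fun_prop) measurable_fst).compl
  have hangle : ∀ r θ, 0 < r → θ ∈ Ioo (-π) π →
      (polarCoord.symm (r, θ) ∈ {p : ℝ × ℝ | sign (p.1 + σ * p.2) ≠ sign p.1} ↔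
        θ ∈ Icc (-(π / 2)) (φ - π / 2) ∪ Icc (π / 2) (φ + π / 2)) := by
    intro r θ hr hθ
    have hsum : r * cos θ + σ * (r * sin θ) = r * (√(1 + σ ^ 2) * cos (θ - φ)) := by
      rw [← cos_add_mul_sin_eq_sqrt_mul_cos_sub_arctan]
      ring
    rw [← sign_cos_sub_ne_sign_cos_iff hφ₀ hφ.le hθ, polarCoord_symm_apply, mem_ofPred_eq, hsum,
      sign_mul_of_pos hr, sign_mul_of_pos (by positivity), sign_mul_of_pos hr]
  have hdisj : Disjoint (Icc (-(π / 2)) (φ - π / 2)) (Icc (π / 2) (φ + π / 2)) :=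
    disjoint_left.2 fun x hx hx' ↦ by linarith [hx.2, hx'.1]
  have hsub : Icc (-(π / 2)) (φ - π / 2) ∪ Icc (π / 2) (φ + π / 2) ⊆ Ioo (-π) π :=
    union_subset (Icc_subset_Ioo (by linarith [pi_pos]) (by linarith))
      (Icc_subset_Ioo (by linarith [pi_pos]) (by linarith))
  rw [gaussianReal_prod_apply_eq_volume_div hv hmeas (measurableSet_Icc.union measurableSet_Icc)
      hangle, inter_eq_left.2 hsub, measure_union hdisj measurableSet_Icc, volume_Icc,
    volume_Icc, ← ENNReal.ofReal_add (by linarith) (by linarith),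
    ← ENNReal.ofReal_div_of_pos (by positivity)]
  congr 1
  field_simp
  ring

/-- If `X ~ N(0,1)` and `Δ ~ N(0,σ²)` are independent (with `σ > 0`) and
`γ = sign(X + Δ) − sign X`, then `P(γ = 0) = 1 − arctan σ / π`.  Here `Real.sign t` is `1`
if `t > 0`, `-1` if `t < 0` and `0` if `t = 0`. -/
theorem prob_sign_change_eq_zero
    {Ω : Type*} [MeasurableSpace Ω] (μ : Measure Ω) [IsProbabilityMeasure μ]
    (σ : ℝ) (hσ : 0 < σ) (X Δ : Ω → ℝ)
    (hX : Measure.map X μ = gaussianReal 0 1)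
    (hΔ : Measure.map Δ μ = gaussianReal 0 ⟨σ ^ 2, sq_nonneg σ⟩)
    (hXΔ : IndepFun X Δ μ) :
    μ {ω | Real.sign (X ω + Δ ω) - Real.sign (X ω) = 0}
      = ENNReal.ofReal (1 - Real.arctan σ / Real.pi) := by
  have hXm : AEMeasurable X μ := aemeasurable_of_map_neZero (by rw [hX]; infer_instance)
  have hΔm : AEMeasurable Δ μ :=
    aemeasurable_of_map_neZero (by rw [hΔ]; exact (inferInstance : NeZero (gaussianReal 0 _)))
  have hlaw : μ.map (fun ω ↦ (X ω, Δ ω)) =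
      ((gaussianReal 0 1).prod (gaussianReal 0 1)).map (Prod.map id (σ * ·)) := by
    rw [(indepFun_iff_map_prod_eq_prod_map_map hXm hΔm).1 hXΔ, hX, hΔ,
      ← Measure.map_prod_map _ _ measurable_id (measurable_const_mul σ), Measure.map_id,
      gaussianReal_map_const_mul, mul_zero, mul_one]
    rfl
  have hsame : MeasurableSet {p : ℝ × ℝ | sign (p.1 + p.2) = sign p.1} :=
    measurableSet_sign_eq_sign (by fun_prop) measurable_fst
  have hchange : MeasurableSet {p : ℝ × ℝ | sign (p.1 + σ * p.2) ≠ sign p.1} :=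
    (measurableSet_sign_eq_sign (by fun_prop) measurable_fst).compl
  calc μ {ω | sign (X ω + Δ ω) - sign (X ω) = 0}
      = μ.map (fun ω ↦ (X ω, Δ ω)) {p | sign (p.1 + p.2) = sign p.1} := by
        rw [Measure.map_apply_of_aemeasurable (hXm.prodMk hΔm) hsame]
        simp only [sub_eq_zero, preimage_ofPred_eq]
    _ = (gaussianReal 0 1).prod (gaussianReal 0 1) {p | sign (p.1 + σ * p.2) ≠ sign p.1}ᶜ := by
        rw [hlaw, Measure.map_apply (by fun_prop) hsame]
        simp only [compl_ofPred, not_not]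
        rfl
    _ = ENNReal.ofReal (1 - arctan σ / π) := by
        rw [prob_compl_eq_one_sub hchange, gaussianReal_prod_sign_add_mul_ne_sign one_ne_zero hσ,
          ENNReal.ofReal_sub _ (div_nonneg (arctan_nonneg.2 hσ.le) pi_pos.le), ENNReal.ofReal_one]
end

section
/- Let σ > 0, let X ~ N(0,1) and Δ ~ N(0,σ²) be independent real Gaussian random variables, and set γ = sign(X + Δ) − sign(X). Then Var(γ) = E[γ²] = (4/π)·arctan(σ). -/
/-!
Both `sign (X + Δ)` and `sign X` are signs of centred Gaussians, so `γ` has mean zero and its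
variance is `E[γ²]`. Writing `Δ = σ Y` with `Y` standard and independent of `X`, `γ²` depends only
on the direction of `(X, Y)`, and in polar coordinates that direction is uniform on `(-π, π)`.
Since `cos θ + σ sin θ = √(1 + σ²) cos (θ - arctan σ)`, the squared difference of signs is `4`
on the symmetric difference of the half-circle `{cos > 0}` and its rotation by `arctan σ`, a set
of measure `2 arctan σ`, and `0` elsewhere; hence `E[γ²] = 4 · 2 arctan σ / (2π)`.
-/


open MeasureTheory ProbabilityTheory Real Set
open scoped NNReal symmDiff

namespace Real

@[fun_prop]
lemma measurable_sign_s6 : Measurable Real.sign := by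
  exact measurable_const.ite measurableSet_Iio
    (measurable_const.ite measurableSet_Ioi measurable_const)

lemma abs_sign_le_one (r : ℝ) : |sign r| ≤ 1 := by
  rcases sign_apply_eq r with h | h | h <;> simp [h]

lemma sign_mul_of_pos_s6 {r : ℝ} (hr : 0 < r) (t : ℝ) : sign (r * t) = sign t := by
  rcases lt_trichotomy t 0 with ht | rfl | ht
  · rw [sign_of_neg ht, sign_of_neg (mul_neg_of_pos_of_neg hr ht)]
  · simp
  · rw [sign_of_pos ht, sign_of_pos (mul_pos hr ht)]

lemma cos_add_mul_sin_eq (σ θ : ℝ) :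
    cos θ + σ * sin θ = √(1 + σ ^ 2) * cos (θ - arctan σ) := by
  rw [cos_sub, cos_arctan, sin_arctan]
  field_simp

lemma sign_cos_eq_ite {θ : ℝ} (h₁ : -(π + π / 2) < θ) (h₂ : θ < π + π / 2)
    (h₃ : θ ≠ -(π / 2)) (h₄ : θ ≠ π / 2) :
    sign (cos θ) = if θ ∈ Ioo (-(π / 2)) (π / 2) then 1 else -1 := by
  split_ifs with h
  · exact sign_of_pos (cos_pos_of_mem_Ioo h)
  · refine sign_of_neg ?_
    rcases le_or_gt θ (-(π / 2)) with h' | h'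
    · rw [← cos_neg]
      exact cos_neg_of_pi_div_two_lt_of_lt (by linarith [lt_of_le_of_ne h' h₃]) (by linarith)
    · exact cos_neg_of_pi_div_two_lt_of_lt
        (lt_of_le_of_ne (not_lt.mp fun h'' => h ⟨h', h''⟩) h₄.symm) h₂

end Real

lemma volume_real_Ioo_add_symmDiff_Ioo {a b c : ℝ} (hc₀ : 0 ≤ c) (hc : c ≤ b - a) :
    volume.real (Ioo (a + c) (b + c) ∆ Ioo a b) = 2 * c := by
  have hinter : Ioo (a + c) (b + c) ∩ Ioo a b = Ioo (a + c) b := by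
    rw [Ioo_inter_Ioo, max_eq_left (by linarith), min_eq_right (by linarith)]
  have h₁ := measureReal_inter_add_sdiff (μ := volume) (s := Ioo (a + c) (b + c)) (t := Ioo a b)
    measurableSet_Ioo measure_Ioo_lt_top.ne
  have h₂ := measureReal_inter_add_sdiff (μ := volume) (s := Ioo a b) (t := Ioo (a + c) (b + c))
    measurableSet_Ioo measure_Ioo_lt_top.ne
  rw [inter_comm, hinter] at h₂
  rw [hinter] at h₁
  rw [measureReal_symmDiff_eq measurableSet_Ioo measurableSet_Ioo measure_Ioo_lt_top.ne
    measure_Ioo_lt_top.ne]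
  simp only [volume_real_Ioo_of_le (by linarith : a + c ≤ b + c),
    volume_real_Ioo_of_le (by linarith : a ≤ b), volume_real_Ioo_of_le (by linarith : a + c ≤ b)]
    at h₁ h₂
  linarith

lemma sq_sign_cos_add_mul_sin_sub_sign_cos {σ θ : ℝ} (hσ : 0 < σ) (hθ : θ ∈ Ioo (-π) π)
    (hθ' : θ ∉ ({-(π / 2), π / 2, -(π / 2) + arctan σ, π / 2 + arctan σ} : Set ℝ)) :
    (sign (cos θ + σ * sin θ) - sign (cos θ)) ^ 2
      = (Ioo (-(π / 2) + arctan σ) (π / 2 + arctan σ) ∆ Ioo (-(π / 2)) (π / 2)).indicator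
          (fun _ => 4) θ := by
  have hα₀ : 0 < arctan σ := arctan_pos.mpr hσ
  have hα₁ : arctan σ < π / 2 := arctan_lt_pi_div_two σ
  simp only [mem_insert_iff, mem_singleton_iff, not_or] at hθ'
  obtain ⟨h₁, h₂, h₃, h₄⟩ := hθ'
  have hshift : θ - arctan σ ∈ Ioo (-(π / 2)) (π / 2) ↔
      θ ∈ Ioo (-(π / 2) + arctan σ) (π / 2 + arctan σ) := by
    simp only [mem_Ioo]; constructor <;> rintro ⟨_, _⟩ <;> constructor <;> linarith
  rw [cos_add_mul_sin_eq, sign_mul_of_pos_s6 (sqrt_pos.mpr (by positivity)),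
    sign_cos_eq_ite (by linarith [hθ.1]) (by linarith [hθ.2])
      (fun h => h₃ (by linarith)) (fun h => h₄ (by linarith)),
    sign_cos_eq_ite (by linarith [hθ.1]) (by linarith [hθ.2]) h₁ h₂]
  by_cases hA : θ ∈ Ioo (-(π / 2) + arctan σ) (π / 2 + arctan σ) <;>
    by_cases hI : θ ∈ Ioo (-(π / 2)) (π / 2) <;>
    norm_num [hshift, hA, hI, indicator, mem_symmDiff]

lemma integral_sq_sign_cos_add_mul_sin_sub_sign_cos {σ : ℝ} (hσ : 0 < σ) :
    ∫ θ in Ioo (-π) π, (sign (cos θ + σ * sin θ) - sign (cos θ)) ^ 2 = 8 * arctan σ := by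
  have hα₀ : 0 < arctan σ := arctan_pos.mpr hσ
  have hα₁ : arctan σ < π / 2 := arctan_lt_pi_div_two σ
  set S := Ioo (-(π / 2) + arctan σ) (π / 2 + arctan σ) ∆ Ioo (-(π / 2)) (π / 2)
  have hS : S ⊆ Ioo (-π) π := by
    refine symmDiff_subset_union.trans (union_subset ?_ ?_) <;>
      exact Ioo_subset_Ioo (by linarith) (by linarith)
  have hexc : ∀ᵐ θ : ℝ, θ ∉ ({-(π / 2), π / 2, -(π / 2) + arctan σ, π / 2 + arctan σ} : Set ℝ) :=
    measure_eq_zero_iff_ae_notMem.mp ((toFinite _).measure_zero _)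
  calc ∫ θ in Ioo (-π) π, (sign (cos θ + σ * sin θ) - sign (cos θ)) ^ 2
      = ∫ θ in Ioo (-π) π, S.indicator (fun _ => 4) θ := by
        refine setIntegral_congr_ae measurableSet_Ioo ?_
        filter_upwards [hexc] with θ hθ' hθ
        exact sq_sign_cos_add_mul_sin_sub_sign_cos hσ hθ hθ'
    _ = 4 * volume.real S := by
        rw [setIntegral_indicator ((measurableSet_Ioo).symmDiff measurableSet_Ioo),
          inter_eq_self_of_subset_right hS, setIntegral_const, smul_eq_mul, mul_comm]
    _ = 8 * arctan σ := by
        rw [volume_real_Ioo_add_symmDiff_Ioo hα₀.le (by linarith)]; ring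

lemma gaussianPDFReal_zero_one_mul (x y : ℝ) :
    gaussianPDFReal 0 1 x * gaussianPDFReal 0 1 y = (2 * π)⁻¹ * exp (-(x ^ 2 + y ^ 2) / 2) := by
  simp only [gaussianPDFReal, NNReal.coe_one, mul_one, sub_zero]
  rw [mul_mul_mul_comm, ← exp_add, ← mul_inv, mul_self_sqrt (by positivity)]
  ring_nf

lemma integral_Ioi_mul_exp_neg_sq_div_two : ∫ r in Ioi (0 : ℝ), r * exp (-r ^ 2 / 2) = 1 := by
  have h := integral_rpow_mul_exp_neg_mul_rpow (p := 2) (q := 1) (b := 1 / 2)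
    (by norm_num) (by norm_num) (by norm_num)
  norm_num at h
  convert h using 3 with r
  ring_nf

lemma integral_gaussianReal_prod_eq_integral_pdf_mul (f : ℝ × ℝ → ℝ) :
    ∫ p, f p ∂(gaussianReal 0 1).prod (gaussianReal 0 1)
      = ∫ p : ℝ × ℝ, (gaussianPDFReal 0 1 p.1 * gaussianPDFReal 0 1 p.2) * f p := by
  rw [gaussianReal_of_var_ne_zero 0 one_ne_zero,
    prod_withDensity (measurable_gaussianPDF 0 1) (measurable_gaussianPDF 0 1),
    ← Measure.volume_eq_prod, integral_withDensity_eq_integral_toReal_smul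
      (by fun_prop)
      (.of_forall fun _ => ENNReal.mul_lt_top gaussianPDF_lt_top gaussianPDF_lt_top)]
  simp only [ENNReal.toReal_mul, toReal_gaussianPDF, smul_eq_mul]

lemma integral_gaussianReal_prod_of_scale_invariant (f : ℝ × ℝ → ℝ)
    (hf : ∀ r : ℝ, 0 < r → ∀ p, f (r • p) = f p) :
    ∫ p, f p ∂(gaussianReal 0 1).prod (gaussianReal 0 1)
      = (2 * π)⁻¹ * ∫ θ in Ioo (-π) π, f (cos θ, sin θ) := by
  have hpolar : ∀ p ∈ Ioi (0 : ℝ) ×ˢ Ioo (-π) π,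
      p.1 • ((gaussianPDFReal 0 1 (polarCoord.symm p).1
        * gaussianPDFReal 0 1 (polarCoord.symm p).2) * f (polarCoord.symm p))
      = (2 * π)⁻¹ * (p.1 * exp (-p.1 ^ 2 / 2)) * f (cos p.2, sin p.2) := by
    rintro ⟨r, θ⟩ ⟨hr, -⟩
    have hrθ : polarCoord.symm (r, θ) = r • (cos θ, sin θ) := by
      simp [polarCoord_symm_apply]
    rw [hrθ, hf r hr, Prod.smul_fst, Prod.smul_snd, smul_eq_mul, smul_eq_mul, smul_eq_mul,
      gaussianPDFReal_zero_one_mul]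
    have : (r * cos θ) ^ 2 + (r * sin θ) ^ 2 = r ^ 2 := by
      linear_combination r ^ 2 * sin_sq_add_cos_sq θ
    rw [this]
    ring
  rw [integral_gaussianReal_prod_eq_integral_pdf_mul, ← integral_comp_polarCoord_symm,
    polarCoord_target, setIntegral_congr_fun (measurableSet_Ioi.prod measurableSet_Ioo) hpolar,
    Measure.volume_eq_prod, setIntegral_prod_mul (fun r => (2 * π)⁻¹ * (r * exp (-r ^ 2 / 2)))
      (fun θ => f (cos θ, sin θ)), integral_const_mul, integral_Ioi_mul_exp_neg_sq_div_two,
    mul_one]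

lemma aemeasurable_of_map_eq_gaussianReal {Ω : Type*} [MeasurableSpace Ω] {μ : Measure Ω}
    {Y : Ω → ℝ} {m : ℝ} {v : ℝ≥0} (hY : μ.map Y = gaussianReal m v) : AEMeasurable Y μ :=
  aemeasurable_of_map_neZero (by rw [hY]; infer_instance)

lemma integral_gaussianReal_eq_zero_of_odd {f : ℝ → ℝ} (hf : ∀ x, f (-x) = -f x) (v : ℝ≥0) :
    ∫ x, f x ∂gaussianReal 0 v = 0 := by
  have h := integral_map_equiv (MeasurableEquiv.neg ℝ) f (μ := gaussianReal 0 v)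
  simp only [MeasurableEquiv.neg_apply, gaussianReal_map_neg, neg_zero, hf, integral_neg] at h
  linarith

lemma integral_sign_eq_zero_of_map_eq_gaussianReal {Ω : Type*} [MeasurableSpace Ω]
    {μ : Measure Ω} {Y : Ω → ℝ} {v : ℝ≥0} (hY : μ.map Y = gaussianReal 0 v) :
    ∫ ω, sign (Y ω) ∂μ = 0 := by
  rw [← integral_map (aemeasurable_of_map_eq_gaussianReal hY)
    measurable_sign_s6.aestronglyMeasurable, hY]
  exact integral_gaussianReal_eq_zero_of_odd (fun _ => sign_neg) v

lemma integral_sign_sub_sign_eq_zero {Ω : Type*} [MeasurableSpace Ω] {μ : Measure Ω}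
    [IsFiniteMeasure μ] {Y Z : Ω → ℝ} {v w : ℝ≥0} (hY : μ.map Y = gaussianReal 0 v)
    (hZ : μ.map Z = gaussianReal 0 w) :
    ∫ ω, (sign (Y ω) - sign (Z ω)) ∂μ = 0 := by
  have hint : ∀ {U : Ω → ℝ}, AEMeasurable U μ → Integrable (fun ω => sign (U ω)) μ := fun hU =>
    .of_bound (measurable_sign_s6.comp_aemeasurable hU).aestronglyMeasurable 1
      (.of_forall fun _ => abs_sign_le_one _)
  rw [integral_sub (hint (aemeasurable_of_map_eq_gaussianReal hY))
    (hint (aemeasurable_of_map_eq_gaussianReal hZ)),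
    integral_sign_eq_zero_of_map_eq_gaussianReal hY,
    integral_sign_eq_zero_of_map_eq_gaussianReal hZ, sub_zero]

lemma integral_comp_eq_integral_prod_gaussianReal {Ω : Type*} [MeasurableSpace Ω]
    {μ : Measure Ω} [IsFiniteMeasure μ] {σ : ℝ} {X Δ : Ω → ℝ} (hXm : AEMeasurable X μ)
    (hΔ : μ.map Δ = gaussianReal 0 ⟨σ ^ 2, sq_nonneg σ⟩) (hXΔ : IndepFun X Δ μ)
    {g : ℝ × ℝ → ℝ} (hg : Measurable g) :
    ∫ ω, g (X ω, Δ ω) ∂μ = ∫ p, g (p.1, σ * p.2) ∂(μ.map X).prod (gaussianReal 0 1) := by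
  have hΔm := aemeasurable_of_map_eq_gaussianReal hΔ
  have hscale : gaussianReal 0 ⟨σ ^ 2, sq_nonneg σ⟩ = (gaussianReal 0 1).map (σ * ·) := by
    rw [gaussianReal_map_const_mul, mul_zero, mul_one]
    rfl
  have hlaw : μ.map (fun ω => (X ω, Δ ω))
      = ((μ.map X).prod (gaussianReal 0 1)).map (fun p => (p.1, σ * p.2)) := by
    rw [(indepFun_iff_map_prod_eq_prod_map_map hXm hΔm).mp hXΔ, hΔ, hscale,
      ← Measure.map_id (μ := μ.map X), Measure.map_prod_map _ _ measurable_id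
        (measurable_const_mul σ), Measure.map_id]
    rfl
  rw [← integral_map (hXm.prodMk hΔm) hg.aestronglyMeasurable, hlaw,
    integral_map (by fun_prop) hg.aestronglyMeasurable]

/-- If `X ~ N(0,1)` and `Δ ~ N(0,σ²)` are independent (with `σ > 0`) and
`γ = sign(X + Δ) − sign X`, then `Var γ = E[γ²] = (4/π)·arctan σ`.  Here `Real.sign t` is
`1` if `t > 0`, `-1` if `t < 0` and `0` if `t = 0`. -/
theorem variance_sign_change
    {Ω : Type*} [MeasurableSpace Ω] (μ : Measure Ω) [IsProbabilityMeasure μ]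
    (σ : ℝ) (hσ : 0 < σ) (X Δ : Ω → ℝ)
    (hX : Measure.map X μ = gaussianReal 0 1)
    (hΔ : Measure.map Δ μ = gaussianReal 0 ⟨σ ^ 2, sq_nonneg σ⟩)
    (hXΔ : IndepFun X Δ μ) :
    variance (fun ω => Real.sign (X ω + Δ ω) - Real.sign (X ω)) μ
        = ∫ ω, (Real.sign (X ω + Δ ω) - Real.sign (X ω)) ^ 2 ∂μ ∧
      ∫ ω, (Real.sign (X ω + Δ ω) - Real.sign (X ω)) ^ 2 ∂μ
        = (4 / Real.pi) * Real.arctan σ := by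
  have hXm := aemeasurable_of_map_eq_gaussianReal hX
  have hΔm := aemeasurable_of_map_eq_gaussianReal hΔ
  have hsum : μ.map (fun ω => X ω + Δ ω) = gaussianReal 0 (1 + ⟨σ ^ 2, sq_nonneg σ⟩) := by
    have h := gaussianReal_add_gaussianReal_of_indepFun hXΔ hX hΔ
    rwa [add_zero] at h
  refine ⟨variance_of_integral_eq_zero (by fun_prop) (integral_sign_sub_sign_eq_zero hsum hX), ?_⟩
  have hscale : ∀ r : ℝ, 0 < r → ∀ p : ℝ × ℝ,
      (sign ((r • p).1 + σ * (r • p).2) - sign (r • p).1) ^ 2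
        = (sign (p.1 + σ * p.2) - sign p.1) ^ 2 := by
    intro r hr p
    simp only [Prod.smul_fst, Prod.smul_snd, smul_eq_mul]
    rw [show r * p.1 + σ * (r * p.2) = r * (p.1 + σ * p.2) by ring, sign_mul_of_pos_s6 hr,
      sign_mul_of_pos_s6 hr]
  rw [integral_comp_eq_integral_prod_gaussianReal hXm hΔ hXΔ
      (g := fun p => (sign (p.1 + p.2) - sign p.1) ^ 2) (by fun_prop), hX,
    integral_gaussianReal_prod_of_scale_invariant _ hscale,
    integral_sq_sign_cos_add_mul_sin_sub_sign_cos hσ]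
  field_simp
  ring
end

section
/- For every real σ with 0 < σ < 1, one has (4/π)·arctan(σ) > σ². Consequently, in the one-layer activation-binarization model, for every n ≥ 1 and σ_w > 0, the variance n·σ_w²·(4/π)·arctan(σ) of the binarized network's output change strictly exceeds the variance n·σ_w²·σ² of the full-precision network's output change whenever 0 < σ < 1. -/
open Real

lemma arctan_strictConcave : StrictConcaveOn ℝ (Set.Icc (0:ℝ) 1) Real.arctan := by
  apply StrictAntiOn.strictConcaveOn_of_deriv (convex_Icc 0 1)
    (Real.continuous_arctan.continuousOn)
  rw [Real.deriv_arctan]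
  intro x hx y hy hxy
  rw [interior_Icc] at hx hy
  have hx0 : 0 < x := hx.1
  have h1 : (0:ℝ) < 1 + x ^ 2 := by positivity
  have h2 : (0:ℝ) < 1 + y ^ 2 := by positivity
  rw [div_lt_div_iff₀ h2 h1]
  nlinarith [hx.1, hy.1, hxy]

lemma arctan_gt (σ : ℝ) (h0 : 0 < σ) (h1 : σ < 1) : Real.arctan σ > σ * (π / 4) := by
  have hc := arctan_strictConcave.2 (Set.mem_Icc.mpr ⟨le_refl 0, zero_le_one⟩)
    (Set.mem_Icc.mpr ⟨zero_le_one, le_refl 1⟩) (by norm_num : (0:ℝ) ≠ 1)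
    (show (0:ℝ) < 1 - σ by linarith) h0 (by ring : (1 - σ) + σ = 1)
  simp only [smul_eq_mul, Real.arctan_zero, Real.arctan_one, mul_zero, zero_add, mul_one,
    mul_zero] at hc
  linarith

/-- For every `0 < σ < 1` one has `(4/π)·arctan σ > σ²`; consequently, in the one-layer
activation-binarization model, the output-change variance `n·σ_w²·(4/π)·arctan σ` of the
binarized network strictly exceeds the output-change variance `n·σ_w²·σ²` of the
full-precision network. -/
theorem arctan_variance_gt_of_lt_one (σ : ℝ) (h0 : 0 < σ) (h1 : σ < 1) :
    (4 / Real.pi) * Real.arctan σ > σ ^ 2 ∧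
      ∀ n : ℕ, 1 ≤ n → ∀ σw : ℝ, 0 < σw →
        (n : ℝ) * σw ^ 2 * ((4 / Real.pi) * Real.arctan σ)
          > (n : ℝ) * σw ^ 2 * σ ^ 2 := by
  have hπ : 0 < π := Real.pi_pos
  have key : (4 / Real.pi) * Real.arctan σ > σ ^ 2 := by
    have h := arctan_gt σ h0 h1
    have hσ2 : σ ^ 2 < σ := by nlinarith
    have : (4 / π) * Real.arctan σ > (4 / π) * (σ * (π / 4)) := by
      apply mul_lt_mul_of_pos_left h (by positivity)
    calc σ ^ 2 < σ := hσ2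
      _ = (4 / π) * (σ * (π / 4)) := by field_simp
      _ < (4 / π) * Real.arctan σ := this
  refine ⟨key, fun n hn σw hσw => ?_⟩
  have hpos : (0:ℝ) < (n : ℝ) * σw ^ 2 := by
    have : (1:ℝ) ≤ n := by exact_mod_cast hn
    positivity
  exact mul_lt_mul_of_pos_left key hpos
end
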